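/- arXiv:1107.2826 — 4 statements merged into one kernel-verified Lean document; each statement's English description precedes it below -/
import Mathlib

section
/- Let Δₙ ⊂ ℝ² be a regular n-gon with side length 1 (n ≥ 3). If a straight line L intersects the boundary of Δₙ at two points A and B, let d = |AB| and let l₁, l₂ be the lengths of the two boundary paths of Δₙ joining A and B. Then there exists an absolute constant C > 0, independent of n, such that C·min{l₁, l₂} ≤ d ≤ min{l₁, l₂}. -/
/-!
The upper bound holds because `polyBd n` runs along sides of length one at unit speed, so it is
`1`-Lipschitz; periodicity turns the arc from `t` to `s + n` into the second boundary path.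

For the lower bound (with `C = 1/4`) write `A`, `B` on the sides `[v_a, v_{a+1}]`, `[v_b, v_{b+1}]`
with fractional positions `u, v`, and put `m = b - a`, `e = v - u`, `x = π / n`, so that the
shorter arc has length `m + e ≤ n / 2`. The chords `v_{a+1} v_b` and `v_a v_{b+1}` are parallel;
projecting `AB` onto their direction gives
`|AB| ≥ ((1 - e) sin ((m - 1) x) + (1 + e) sin ((m + 1) x)) / (2 sin x)`,
which at `e = ∓1` is exactly the length of the chord `v_{a+1} v_b`, resp. `v_a v_{b+1}`.
Both this bound and `m + e` are affine in `e`, so it suffices to compare them at an endpoint of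
the admissible range of `e`: there either `A`, `B` are vertices `j ≤ n / 2` steps apart, where
Jordan's inequality gives `j sin x ≤ 2 sin (j x)`, or the two arcs have equal length, where
`cos y ≥ 1 - y² / 2` suffices.
-/

/-- The `i`-th vertex of the regular `n`-gon with side length one, centered at the
origin (circumradius `1 / (2 sin (π/n))`). -/
noncomputable def polyVtx (n : ℕ) (i : ℤ) : ℂ :=
  (1 / (2 * Real.sin (Real.pi / n))) * Complex.exp (2 * Real.pi * i / n * Complex.I)

/-- Arclength parametrization of the boundary of the regular `n`-gon with side length
one: for `s ∈ [0, n]`, `polyBd n s` is the point at arclength `s` along the boundary. -/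
noncomputable def polyBd (n : ℕ) (s : ℝ) : ℂ :=
  (1 - Int.fract s) • polyVtx n ⌊s⌋ + Int.fract s • polyVtx n (⌊s⌋ + 1)

open Real AffineMap

lemma polyVtx_add_natCast {n : ℕ} (hn : n ≠ 0) (i : ℤ) : polyVtx n (i + n) = polyVtx n i := by
  have hn' : (n : ℂ) ≠ 0 := Nat.cast_ne_zero.mpr hn
  rw [polyVtx, polyVtx, show 2 * (π : ℂ) * ((i + n : ℤ) : ℂ) / n * Complex.I
    = 2 * π * i / n * Complex.I + 2 * π * Complex.I by push_cast; field_simp,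
    Complex.exp_add, Complex.exp_two_pi_mul_I, mul_one]

lemma polyBd_add_natCast {n : ℕ} (hn : n ≠ 0) (s : ℝ) : polyBd n (s + n) = polyBd n s := by
  rw [polyBd, polyBd, Int.floor_add_natCast, Int.fract_add_natCast, add_right_comm,
    polyVtx_add_natCast hn, polyVtx_add_natCast hn]

lemma polyBd_eq_lineMap (n : ℕ) (s : ℝ) :
    polyBd n s = lineMap (polyVtx n ⌊s⌋) (polyVtx n (⌊s⌋ + 1)) (Int.fract s) :=
  (lineMap_apply_module _ _ _).symm

lemma polyBd_intCast_add (n : ℕ) (m : ℤ) {u : ℝ} (hu₀ : 0 ≤ u) (hu₁ : u ≤ 1) :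
    polyBd n (m + u) = lineMap (polyVtx n m) (polyVtx n (m + 1)) u := by
  rcases hu₁.lt_or_eq with hu₁ | rfl
  · have hfloor : ⌊(m + u : ℝ)⌋ = m := by
      rw [Int.floor_intCast_add, Int.floor_eq_zero_iff.mpr ⟨hu₀, hu₁⟩, add_zero]
    rw [polyBd_eq_lineMap, hfloor, Int.fract_intCast_add, Int.fract_eq_self.mpr ⟨hu₀, hu₁⟩]
  · rw [lineMap_apply_one, polyBd, ← Int.cast_one, ← Int.cast_add, Int.floor_intCast,
      Int.fract_intCast]
    simp

lemma dist_polyVtx_add_one {n : ℕ} (hn : 2 ≤ n) (i : ℤ) :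
    dist (polyVtx n i) (polyVtx n (i + 1)) = 1 := by
  have hsin : 0 < sin (π / n) := by
    apply sin_pos_of_pos_of_lt_pi (by positivity)
    exact div_lt_self pi_pos (by exact_mod_cast hn)
  have hdiff : polyVtx n (i + 1) - polyVtx n i
      = polyVtx n i * (Complex.exp (Complex.I * ((2 * (π / n) : ℝ) : ℂ)) - 1) := by
    simp only [polyVtx, mul_sub, mul_one, mul_assoc, ← Complex.exp_add]
    push_cast
    ring_nf
  have hnorm : ‖polyVtx n i‖ = 1 / (2 * sin (π / n)) := by
    rw [polyVtx, norm_mul, show 2 * (π : ℂ) * i / n * Complex.I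
      = ((2 * π * i / n : ℝ) : ℂ) * Complex.I by push_cast; ring,
      Complex.norm_exp_ofReal_mul_I, mul_one]
    simp only [norm_div, norm_one, norm_mul, Complex.norm_ofNat, Complex.norm_real,
      Real.norm_of_nonneg hsin.le]
  rw [dist_comm, dist_eq_norm, hdiff, norm_mul, hnorm, Complex.norm_exp_I_mul_ofReal_sub_one,
    mul_div_cancel_left₀ _ two_ne_zero, Real.norm_of_nonneg (by positivity)]
  field_simp

lemma dist_polyBd_eq_of_le_floor_add_one {n : ℕ} (hn : 2 ≤ n) {s t : ℝ} (hst : s ≤ t)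
    (ht : t ≤ ⌊s⌋ + 1) : dist (polyBd n s) (polyBd n t) = t - s := by
  have hs : s = ⌊s⌋ + Int.fract s := (Int.floor_add_fract s).symm
  have ht' : t = ⌊s⌋ + (t - ⌊s⌋) := by ring
  rw [hs, ht', polyBd_intCast_add n _ (Int.fract_nonneg s) (Int.fract_lt_one s).le,
    polyBd_intCast_add n _ (by linarith [Int.floor_le s]) (by linarith), dist_lineMap_lineMap,
    dist_polyVtx_add_one hn, mul_one, Real.dist_eq, abs_sub_comm, abs_of_nonneg] <;> linarith

lemma dist_polyBd_le {n : ℕ} (hn : 2 ≤ n) {s t : ℝ} (hst : s ≤ t) :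
    dist (polyBd n s) (polyBd n t) ≤ t - s := by
  suffices ∀ k : ℕ, ∀ s, s ≤ t → t ≤ ⌊s⌋ + k → dist (polyBd n s) (polyBd n t) ≤ t - s from
    this ⌈t - ⌊s⌋⌉₊ s hst (by linarith [Nat.le_ceil (t - ⌊s⌋)])
  intro k
  induction k with
  | zero =>
    intro s hst ht
    obtain rfl : s = t := le_antisymm hst (by push_cast at ht; linarith [Int.floor_le s])
    simp
  | succ k ih =>
    intro s hst ht
    rcases le_or_gt t (⌊s⌋ + 1) with hside | hside
    · exact (dist_polyBd_eq_of_le_floor_add_one hn hst hside).le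
    set c : ℝ := ⌊s⌋ + 1 with hc
    have hc_floor : ⌊c⌋ = ⌊s⌋ + 1 := by rw [hc, Int.floor_add_one, Int.floor_intCast]
    calc dist (polyBd n s) (polyBd n t)
        ≤ dist (polyBd n s) (polyBd n c) + dist (polyBd n c) (polyBd n t) := dist_triangle _ _ _
      _ ≤ (c - s) + (t - c) := by
        gcongr
        · exact (dist_polyBd_eq_of_le_floor_add_one hn (Int.lt_floor_add_one s).le le_rfl).le
        · exact ih c hside.le (by rw [hc_floor]; push_cast at ht ⊢; linarith)
      _ = t - s := by ring

lemma pi_div_four_le_weighted_cos_sum {x e : ℝ} (hx : |x| ≤ π / 3) (he : |e| ≤ 1) :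
    π / 4 ≤ (1 - e) * cos ((1 + e) * x) + (1 + e) * cos ((1 - e) * x) := by
  obtain ⟨he₁, he₂⟩ := abs_le.mp he
  have hx2 : x ^ 2 ≤ (π / 3) ^ 2 := sq_le_sq' (abs_le.mp hx).1 (abs_le.mp hx).2
  have hpi := pi_lt_d2
  calc π / 4 ≤ 2 - (π / 3) ^ 2 := by nlinarith [pi_pos]
    _ ≤ 2 - (1 - e ^ 2) * x ^ 2 := by nlinarith [sq_nonneg e, sq_nonneg x]
    _ = (1 - e) * (1 - ((1 + e) * x) ^ 2 / 2) + (1 + e) * (1 - ((1 - e) * x) ^ 2 / 2) := by ring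
    _ ≤ _ := by gcongr <;> first | linarith | exact one_sub_sq_div_two_le_cos

lemma mul_sin_le_two_mul_weighted_sin_sum_of_mul_eq {x e m : ℝ} (hx₀ : 0 < x) (hx : x ≤ π / 3)
    (he : |e| ≤ 1) (hπ : (m + e) * x = π / 2) :
    (m + e) * sin x ≤ 2 * ((1 - e) * sin ((m - 1) * x) + (1 + e) * sin ((m + 1) * x)) := by
  have h₁ : sin ((m - 1) * x) = cos ((1 + e) * x) := by
    rw [← sin_pi_div_two_sub]; congr 1; linarith
  have h₂ : sin ((m + 1) * x) = cos ((1 - e) * x) := by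
    rw [← sin_pi_div_two_sub, ← sin_pi_sub]; congr 1; linarith
  have hm : 0 ≤ m + e := by nlinarith [pi_pos]
  rw [h₁, h₂]
  linarith [mul_le_mul_of_nonneg_left (sin_le hx₀.le) hm,
    pi_div_four_le_weighted_cos_sum (abs_le.mpr ⟨by linarith, hx⟩) he]

lemma mul_sin_le_two_mul_sin {x m : ℝ} (hx : 0 ≤ x) (hm : 0 ≤ m) (hmx : m * x ≤ π / 2) :
    m * sin x ≤ 2 * sin (m * x) :=
  calc m * sin x ≤ m * x := mul_le_mul_of_nonneg_left (sin_le hx) hm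
    _ = π / 2 * (2 / π * (m * x)) := by field_simp
    _ ≤ π / 2 * sin (m * x) := by gcongr; exact mul_le_sin (by positivity) hmx
    _ ≤ 2 * sin (m * x) := by
      gcongr
      · exact sin_nonneg_of_nonneg_of_le_pi (by positivity) (by linarith [pi_pos])
      · linarith [pi_le_four]

lemma mul_sin_le_two_mul_weighted_sin_sum {x e : ℝ} {m : ℤ} (hx₀ : 0 < x) (hx : x ≤ π / 3)
    (hm : 0 ≤ m) (he : |e| ≤ 1) (h₀ : 0 ≤ m + e) (hπ : (m + e) * x ≤ π / 2) :
    (m + e) * sin x ≤ 2 * ((1 - e) * sin ((m - 1) * x) + (1 + e) * sin ((m + 1) * x)) := by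
  set G : ℝ → ℝ := fun e => (1 - e) * sin ((m - 1) * x) + (1 + e) * sin ((m + 1) * x) with hG
  obtain ⟨he₁, he₂⟩ := abs_le.mp he
  have hsin : 0 ≤ sin x := sin_nonneg_of_nonneg_of_le_pi hx₀.le (by linarith [pi_pos])
  have affine : ∀ e', 2 * G e' - (m + e') * sin x
      = 2 * G e - (m + e) * sin x + (e' - e) * ((4 * cos (m * x) - 1) * sin x) := by
    intro e'
    simp only [hG, sub_mul, add_mul, one_mul, sin_sub, sin_add]
    ring
  suffices ∃ e', (e' - e) * ((4 * cos (m * x) - 1) * sin x) ≤ 0 ∧ (m + e') * sin x ≤ 2 * G e' by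
    obtain ⟨e', hslope, hend⟩ := this
    linarith [affine e']
  rcases le_or_gt 0 (4 * cos (m * x) - 1) with hpos | hneg
  · rcases hm.eq_or_lt with rfl | hm_pos
    · refine ⟨0, ?_, ?_⟩
      · exact mul_nonpos_of_nonpos_of_nonneg (by simp at h₀; linarith) (mul_nonneg hpos hsin)
      · simp [hG]
    · have hm₁ : (1 : ℝ) ≤ m := by exact_mod_cast hm_pos
      refine ⟨-1, mul_nonpos_of_nonpos_of_nonneg (by linarith) (mul_nonneg hpos hsin), ?_⟩
      have := mul_sin_le_two_mul_sin hx₀.le (by linarith : (0 : ℝ) ≤ m - 1) (by nlinarith)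
      have := mul_nonneg (by linarith : (0 : ℝ) ≤ m - 1) hsin
      simp only [hG]
      linarith
  · rcases le_or_gt ((m + 1) * x) (π / 2) with hshort | hlong
    · refine ⟨1, mul_nonpos_of_nonneg_of_nonpos (by linarith) ?_, ?_⟩
      · exact mul_nonpos_of_nonpos_of_nonneg hneg.le hsin
      have := mul_sin_le_two_mul_sin hx₀.le (by linarith : (0 : ℝ) ≤ m + 1) hshort
      have := mul_nonneg (by linarith : (0 : ℝ) ≤ m + 1) hsin
      simp only [hG]
      linarith
    · -- the antipodal endpoint `e'`, at which the two boundary arcs have equal length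
      set e' := π / (2 * x) - m with he'
      have hx' : (m + e') * x = π / 2 := by rw [he']; field_simp; ring
      refine ⟨e', mul_nonpos_of_nonneg_of_nonpos ?_ ?_, ?_⟩
      · nlinarith
      · exact mul_nonpos_of_nonpos_of_nonneg hneg.le hsin
      exact mul_sin_le_two_mul_weighted_sin_sum_of_mul_eq hx₀ hx
        (abs_le.mpr ⟨by nlinarith, by nlinarith⟩) hx'

lemma im_exp_mul_polyVtx (n : ℕ) (θ : ℝ) (j : ℤ) :
    (Complex.exp (-(θ * Complex.I)) * polyVtx n j).im
      = sin (2 * j * (π / n) - θ) / (2 * sin (π / n)) := by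
  rw [polyVtx, mul_left_comm, ← Complex.exp_add,
    show -(θ * Complex.I) + 2 * π * j / n * Complex.I
      = ((2 * j * (π / n) - θ : ℝ) : ℂ) * Complex.I by push_cast; ring,
    show (1 / (2 * sin (π / n)) : ℂ) = ((1 / (2 * sin (π / n)) : ℝ) : ℂ) by push_cast; rfl,
    Complex.im_ofReal_mul, Complex.exp_ofReal_mul_I_im]
  ring

lemma weighted_sin_sum_div_le_dist_polyBd (n : ℕ) (s t : ℝ) :
    ((1 - (Int.fract t - Int.fract s)) * sin (((⌊t⌋ - ⌊s⌋ : ℤ) - 1) * (π / n))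
      + (1 + (Int.fract t - Int.fract s)) * sin (((⌊t⌋ - ⌊s⌋ : ℤ) + 1) * (π / n)))
        / (2 * sin (π / n)) ≤ dist (polyBd n s) (polyBd n t) := by
  -- project `B - A` onto the common direction of the chords `v_{a+1} v_b` and `v_a v_{b+1}`,
  -- where `a = ⌊s⌋`, `b = ⌊t⌋`
  set θ : ℝ := (⌊s⌋ + ⌊t⌋ + 1) * (π / n)
  calc _ = (Complex.exp (-(θ * Complex.I)) * (polyBd n t - polyBd n s)).im := by
        simp only [polyBd, Complex.real_smul, mul_sub, mul_add, mul_left_comm (Complex.exp _),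
          Complex.sub_im, Complex.add_im, Complex.im_ofReal_mul, im_exp_mul_polyVtx]
        rw [show 2 * ((⌊s⌋ : ℤ) : ℝ) * (π / n) - θ = -(((⌊t⌋ - ⌊s⌋ : ℤ) + 1) * (π / n)) by
            push_cast; ring,
          show 2 * ((⌊s⌋ + 1 : ℤ) : ℝ) * (π / n) - θ = -(((⌊t⌋ - ⌊s⌋ : ℤ) - 1) * (π / n)) by
            push_cast; ring,
          show 2 * ((⌊t⌋ : ℤ) : ℝ) * (π / n) - θ = ((⌊t⌋ - ⌊s⌋ : ℤ) - 1) * (π / n) by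
            push_cast; ring,
          show 2 * ((⌊t⌋ + 1 : ℤ) : ℝ) * (π / n) - θ = ((⌊t⌋ - ⌊s⌋ : ℤ) + 1) * (π / n) by
            push_cast; ring, sin_neg, sin_neg]
        ring
    _ ≤ ‖Complex.exp (-(θ * Complex.I)) * (polyBd n t - polyBd n s)‖ := Complex.im_le_norm _
    _ = dist (polyBd n s) (polyBd n t) := by
        rw [norm_mul, ← neg_mul, ← Complex.ofReal_neg, Complex.norm_exp_ofReal_mul_I, one_mul,
          dist_comm, dist_eq_norm]

lemma sub_div_four_le_dist_polyBd {n : ℕ} (hn : 3 ≤ n) {s t : ℝ} (hst : s ≤ t)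
    (hhalf : t - s ≤ n / 2) :
    (t - s) / 4 ≤ dist (polyBd n s) (polyBd n t) := by
  have hx₀ : 0 < π / n := by positivity
  have hx : π / n ≤ π / 3 :=
    div_le_div_of_nonneg_left pi_pos.le (by norm_num) (by exact_mod_cast hn)
  have hsin : 0 < sin (π / n) := sin_pos_of_pos_of_lt_pi hx₀ (by linarith [pi_pos])
  have hm : 0 ≤ ⌊t⌋ - ⌊s⌋ := sub_nonneg.mpr (Int.floor_le_floor hst)
  have hts : t - s = ((⌊t⌋ - ⌊s⌋ : ℤ) : ℝ) + (Int.fract t - Int.fract s) := by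
    rw [Int.fract, Int.fract]; push_cast; ring
  have he : |Int.fract t - Int.fract s| ≤ 1 := by
    rw [abs_le]
    constructor <;> linarith [Int.fract_nonneg s, Int.fract_nonneg t, Int.fract_lt_one s,
      Int.fract_lt_one t]
  have hπ : (t - s) * (π / n) ≤ π / 2 :=
    calc (t - s) * (π / n) ≤ n / 2 * (π / n) := by gcongr
      _ = π / 2 := by field_simp
  have key := mul_sin_le_two_mul_weighted_sin_sum hx₀ hx hm he (by linarith) (by rwa [← hts])
  rw [← hts] at key
  calc (t - s) / 4 = (t - s) * sin (π / n) / 2 / (2 * sin (π / n)) := by field_simp; ring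
    _ ≤ _ := by gcongr; linarith
    _ ≤ dist (polyBd n s) (polyBd n t) := weighted_sin_sum_div_le_dist_polyBd n s t

/-- For two points `A = polyBd n s`, `B = polyBd n t` on the boundary of a regular
`n`-gon of side length one, the chord length `d = |AB|` satisfies
`C · min{l₁, l₂} ≤ d ≤ min{l₁, l₂}` where `l₁ = t - s` and `l₂ = n - (t - s)` are the
lengths of the two boundary paths joining `A` and `B`, with an absolute constant
`C > 0` independent of `n`. -/
theorem stmt_0 :
    ∃ C : ℝ, 0 < C ∧ ∀ n : ℕ, 3 ≤ n → ∀ s t : ℝ, 0 ≤ s → s ≤ t → t ≤ n →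
      C * min (t - s) ((n : ℝ) - (t - s)) ≤ dist (polyBd n s) (polyBd n t) ∧
      dist (polyBd n s) (polyBd n t) ≤ min (t - s) ((n : ℝ) - (t - s)) := by
  refine ⟨1 / 4, by norm_num, fun n hn s t _ hst htn => ?_⟩
  have hts : t ≤ s + n := by linarith
  have hcomp : dist (polyBd n s) (polyBd n t) = dist (polyBd n t) (polyBd n (s + n)) := by
    rw [polyBd_add_natCast (by omega), dist_comm]
  constructor
  · rcases le_total (t - s) (n / 2) with hhalf | hhalf
    · calc 1 / 4 * min (t - s) (n - (t - s)) ≤ 1 / 4 * (t - s) := by gcongr; exact min_le_left _ _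
        _ ≤ _ := by linarith [sub_div_four_le_dist_polyBd hn hst hhalf]
    · calc 1 / 4 * min (t - s) (n - (t - s)) ≤ 1 / 4 * (s + n - t) := by
            gcongr; exact (min_le_right _ _).trans_eq (by ring)
        _ ≤ _ := by linarith [hcomp ▸ sub_div_four_le_dist_polyBd hn hts (by linarith)]
  · refine le_min (dist_polyBd_le (by omega) hst) ?_
    linarith [hcomp ▸ dist_polyBd_le (by omega) hts]
end

section
/- Let x be a vertex of a semiplanar graph incident to a face σ of degree k ≥ 43, with nonnegative combinatorial curvature Φ(x) ≥ 0. Then Φ(x) ≥ 1/k. Consequently, summing over all k vertices incident to σ, Σ_{x∈σ} Φ(x) ≥ 1. -/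
/-!
Write `Φ = 1/k + r`, where `r = 1/2 - Σ (1/2 - 1/nᵢ)` runs over the faces at `x` other than `σ`.
The values of `r` have a gap below zero: `r < 0` forces `r ≤ -1/42`, the extreme case being the
pair of faces `(3, 7)`. Since `1/k ≤ 1/43 < 1/42`, `Φ ≥ 0` therefore rules out `r < 0`, so `Φ ≥ 1/k`.
-/

open Finset

noncomputable def vertexCurvature {ι : Type*} (s : Finset ι) (m : ι → ℕ) : ℝ :=
  1 - (#s : ℝ) / 2 + ∑ i ∈ s, (1 : ℝ) / m i

lemma vertexCurvature_insert {ι : Type*} [DecidableEq ι] {s : Finset ι} {i : ι} (hi : i ∉ s)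
    (m : ι → ℕ) : vertexCurvature (insert i s) m = vertexCurvature s m - 1 / 2 + 1 / m i := by
  simp only [vertexCurvature, card_insert_of_notMem hi, sum_insert hi]
  push_cast
  ring

lemma one_div_add_one_div_le_of_lt_half {a b : ℕ} (ha : 3 ≤ a) (hb : 3 ≤ b)
    (h : (1 : ℝ) / a + 1 / b < 1 / 2) : (1 : ℝ) / a + 1 / b ≤ 10 / 21 := by
  have ha0 : (0 : ℝ) < a := by positivity
  have hb0 : (0 : ℝ) < b := by positivity
  rw [div_add_div _ _ ha0.ne' hb0.ne', div_lt_div_iff₀ (by positivity) (by norm_num)] at h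
  rw [div_add_div _ _ ha0.ne' hb0.ne', div_le_div_iff₀ (by positivity) (by norm_num)]
  have hlt : 2 * (a + b) < a * b := by
    rw [← Nat.cast_lt (α := ℝ)]; push_cast; linarith
  -- with `x = a - 2`, `y = b - 2` this is `xy ≥ 5 → x + y + 44 ≤ 10xy`
  have hle : 21 * (a + b) ≤ 10 * (a * b) := by nlinarith
  have : (21 * (a + b) : ℝ) ≤ 10 * (a * b) := by exact_mod_cast hle
  linarith

lemma one_div_eq_third_or_le_quarter {a : ℕ} (ha : 3 ≤ a) :
    (1 : ℝ) / a = 1 / 3 ∨ (1 : ℝ) / a ≤ 1 / 4 := by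
  rcases ha.eq_or_lt with rfl | ha
  · left; norm_num
  · right; gcongr; exact_mod_cast ha

lemma one_div_add_one_div_add_one_div_le_of_lt_one {a b c : ℕ} (ha : 3 ≤ a) (hb : 3 ≤ b)
    (hc : 3 ≤ c) (h : (1 : ℝ) / a + 1 / b + 1 / c < 1) :
    (1 : ℝ) / a + 1 / b + 1 / c ≤ 11 / 12 := by
  rcases one_div_eq_third_or_le_quarter ha with ha | ha <;>
  rcases one_div_eq_third_or_le_quarter hb with hb | hb <;>
  rcases one_div_eq_third_or_le_quarter hc with hc | hc <;>
  linarith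

lemma one_div_le_third {a : ℕ} (ha : 3 ≤ a) : (1 : ℝ) / a ≤ 1 / 3 := by
  gcongr; exact_mod_cast ha

lemma vertexCurvature_le_of_lt_half {ι : Type*} {s : Finset ι} {m : ι → ℕ}
    (hm : ∀ i ∈ s, 3 ≤ m i) (h : vertexCurvature s m < 1 / 2) :
    vertexCurvature s m ≤ 1 / 2 - 1 / 42 := by
  classical
  unfold vertexCurvature at h ⊢
  obtain hs | hs | hs | hs | hs : #s = 0 ∨ #s = 1 ∨ #s = 2 ∨ #s = 3 ∨ 4 ≤ #s := by omega
  · norm_num [card_eq_zero.mp hs] at h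
  · obtain ⟨a, rfl⟩ := card_eq_one.mp hs
    simp only [card_singleton, Nat.cast_one, sum_singleton] at h
    have : (0 : ℝ) ≤ 1 / m a := by positivity
    linarith
  · obtain ⟨a, b, hab, rfl⟩ := card_eq_two.mp hs
    rw [hs, sum_pair hab] at h ⊢
    push_cast at h ⊢
    have := one_div_add_one_div_le_of_lt_half (hm a (by simp)) (hm b (by simp)) (by linarith)
    linarith
  · obtain ⟨a, b, c, hab, hac, hbc, rfl⟩ := card_eq_three.mp hs
    rw [hs, sum_insert (by simp [hab, hac]), sum_pair hbc, ← add_assoc] at h ⊢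
    push_cast at h ⊢
    have := one_div_add_one_div_add_one_div_le_of_lt_one (hm a (by simp)) (hm b (by simp))
      (hm c (by simp)) (by linarith)
    linarith
  · have hsum : ∑ i ∈ s, (1 : ℝ) / m i ≤ #s * (1 / 3) := by
      simpa using sum_le_card_nsmul s _ _ fun i hi => one_div_le_third (hm i hi)
    have : (4 : ℝ) ≤ #s := by exact_mod_cast hs
    linarith

lemma one_div_le_vertexCurvature {ι : Type*} [DecidableEq ι] {s : Finset ι} {m : ι → ℕ}
    (hm : ∀ i ∈ s, 3 ≤ m i) {i₀ : ι} (hi₀ : i₀ ∈ s) (hk : 43 ≤ m i₀)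
    (hΦ : 0 ≤ vertexCurvature s m) : 1 / (m i₀ : ℝ) ≤ vertexCurvature s m := by
  rw [← insert_erase hi₀, vertexCurvature_insert (notMem_erase i₀ s)] at hΦ ⊢
  have hk' : 1 / (m i₀ : ℝ) ≤ 1 / 43 := by gcongr; exact_mod_cast hk
  by_contra! hlt
  have hr : vertexCurvature (s.erase i₀) m < 1 / 2 := by linarith
  have := vertexCurvature_le_of_lt_half (fun i hi => hm i (mem_of_mem_erase hi)) hr
  linarith

theorem stmt_7_general (k : ℕ) (hk : 43 ≤ k)
    (d : Fin k → ℕ)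
    (n : (v : Fin k) → Fin (d v) → ℕ) (hn : ∀ v i, 3 ≤ n v i)
    (hσ : ∀ v, ∃ i, n v i = k)
    (Φ : Fin k → ℝ) (hΦ : ∀ v, Φ v = 1 - (d v : ℝ) / 2 + ∑ i, (1 : ℝ) / n v i)
    (hnonneg : ∀ v, 0 ≤ Φ v) :
    (∀ v, (1 : ℝ) / k ≤ Φ v) ∧ 1 ≤ ∑ v, Φ v := by
  have hΦ' : ∀ v, Φ v = vertexCurvature univ (n v) := by simp [hΦ, vertexCurvature]
  have hvertex : ∀ v, (1 : ℝ) / k ≤ Φ v := by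
    intro v
    obtain ⟨i, hi⟩ := hσ v
    have hnonneg_v := hnonneg v
    rw [hΦ'] at hnonneg_v ⊢
    simpa [hi] using one_div_le_vertexCurvature (fun j _ => hn v j) (mem_univ i) (hi ▸ hk)
      hnonneg_v
  refine ⟨hvertex, ?_⟩
  calc (1 : ℝ) = ∑ _v : Fin k, (1 : ℝ) / k := by
        simp [show (k : ℝ) ≠ 0 by positivity]
    _ ≤ ∑ v, Φ v := sum_le_sum fun v _ => hvertex v

/-- Let `σ` be a face of degree `k ≥ 43` of a semiplanar graph with nonnegative
combinatorial curvature, with incident vertices `v : Fin k`, where vertex `v` has degree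
`d v ≥ 3` and is incident to faces of degrees `n v i ≥ 3`, one of which is `σ` itself
(so `n v i = k` for some `i`). If the curvature `Φ v = 1 − (d v)/2 + Σᵢ 1/(n v i)`
is nonnegative at each vertex, then `Φ v ≥ 1/k` for every `v`, and consequently
`Σ_{v ∈ σ} Φ v ≥ 1`. -/
theorem stmt_7 (k : ℕ) (hk : 43 ≤ k)
    (d : Fin k → ℕ) (hd : ∀ v, 3 ≤ d v)
    (n : (v : Fin k) → Fin (d v) → ℕ) (hn : ∀ v i, 3 ≤ n v i)
    (hσ : ∀ v, ∃ i, n v i = k)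
    (Φ : Fin k → ℝ) (hΦ : ∀ v, Φ v = 1 - (d v : ℝ) / 2 + ∑ i, (1 : ℝ) / n v i)
    (hnonneg : ∀ v, 0 ≤ Φ v) :
    (∀ v, (1 : ℝ) / k ≤ Φ v) ∧ 1 ≤ ∑ v, Φ v :=
  stmt_7_general k hk d n hn hσ Φ hΦ hnonneg
end

section
/- There are exactly 17 multisets of integers {n₁,…,n_d} with d ≥ 3, each nᵢ ≥ 3, satisfying Σᵢ 1/nᵢ = d/2 − 1: namely {3,7,42}, {3,8,24}, {3,9,18}, {3,10,15}, {3,12,12}, {4,5,20}, {4,6,12}, {4,8,8}, {5,5,10}, {6,6,6}, {3,3,4,12}, {3,3,6,6}, {3,4,4,6}, {4,4,4,4}, {3,3,3,3,6}, {3,3,3,4,4}, {3,3,3,3,3,3}. -/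
/-!
Each `nᵢ ≥ 3` gives `1/nᵢ ≤ 1/3`, so `d/2 - 1 ≤ d/3`, i.e. `d ≤ 6`. For fixed `d` list the
`nᵢ` in increasing order: if `k` entries remain and their reciprocals must add up to `r`,
the smallest of them, `x`, satisfies `r ≤ k/x`, so `x ≤ k/r`. This bounds every entry in terms
of the previous ones, and the resulting finite search finds exactly the 17 solutions.
-/

/-- A list containing every ascending list of `k` integers `≥ lo` whose reciprocals add up
to `r`. -/
def unitFractionSolutions : ℕ → ℕ → ℚ → List (List ℕ)
  | 0, _, r => if r = 0 then [[]] else []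
  | k + 1, lo, r =>
    (List.range' lo (⌊(k + 1 : ℚ) / r⌋₊ + 1 - lo)).flatMap fun x =>
      (unitFractionSolutions k x (r - 1 / x)).map (x :: ·)

theorem sum_one_div_le_length_div {l : List ℕ} {a : ℕ} (ha : 0 < a) (hl : ∀ x ∈ l, a ≤ x) :
    (l.map fun x : ℕ => (1 : ℚ) / x).sum ≤ l.length / a := by
  have h := (l.map fun x : ℕ => (1 : ℚ) / x).sum_le_card_nsmul (1 / a) <| by
    simp only [List.mem_map, forall_exists_index, and_imp, forall_apply_eq_imp_iff₂]
    intro x hx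
    gcongr
    exact_mod_cast hl x hx
  simpa [div_eq_mul_inv] using h

theorem mem_unitFractionSolutions {lo : ℕ} {r : ℚ} {l : List ℕ} (hlo : 0 < lo)
    (hl : l.Pairwise (· ≤ ·)) (hge : ∀ x ∈ l, lo ≤ x)
    (hsum : (l.map fun x : ℕ => (1 : ℚ) / x).sum = r) :
    l ∈ unitFractionSolutions l.length lo r := by
  induction l generalizing lo r with
  | nil => simp [unitFractionSolutions, ← hsum]
  | cons x t ih =>
    rw [List.pairwise_cons] at hl
    have hlox : lo ≤ x := hge x List.mem_cons_self
    have hx : 0 < x := hlo.trans_le hlox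
    have hr : r ≤ (t.length + 1) / x := by
      simpa [← hsum] using sum_one_div_le_length_div hx (l := x :: t) (by simpa using hl.1)
    have hr₀ : 0 < r := by
      rw [← hsum, List.map_cons, List.sum_cons]
      exact add_pos_of_pos_of_nonneg (by positivity) (List.sum_nonneg (by simp))
    have hxr : x ≤ ⌊(t.length + 1 : ℚ) / r⌋₊ := by
      rw [Nat.le_floor_iff (by positivity), le_div_iff₀ hr₀]
      rwa [le_div_iff₀ (by positivity), mul_comm] at hr
    simp only [unitFractionSolutions, List.length_cons, List.mem_flatMap, List.mem_range',
      List.mem_map]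
    refine ⟨x, ⟨x - lo, by omega, by omega⟩, t, ih hx hl.2 hl.1 ?_, rfl⟩
    simp [← hsum]

theorem length_le_six_of_sum_one_div_eq {l : List ℕ} (hge : ∀ x ∈ l, 3 ≤ x)
    (hsum : (l.map fun x : ℕ => (1 : ℚ) / x).sum = l.length / 2 - 1) : l.length ≤ 6 := by
  have h := hsum ▸ sum_one_div_le_length_div three_pos hge
  have : (l.length : ℚ) ≤ 6 := by linarith
  exact_mod_cast this

theorem flatMap_unitFractionSolutions_curvature_zero :
    ((List.range' 3 4).flatMap fun d => unitFractionSolutions d 3 (d / 2 - 1)) =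
      [[3, 7, 42], [3, 8, 24], [3, 9, 18], [3, 10, 15], [3, 12, 12],
        [4, 5, 20], [4, 6, 12], [4, 8, 8], [5, 5, 10], [6, 6, 6],
        [3, 3, 4, 12], [3, 3, 6, 6], [3, 4, 4, 6], [4, 4, 4, 4],
        [3, 3, 3, 3, 6], [3, 3, 3, 4, 4], [3, 3, 3, 3, 3, 3]] := by
  decide +kernel

/-- There are exactly 17 multisets of integers `{n₁, …, n_d}` with `d ≥ 3`, each
`nᵢ ≥ 3`, satisfying `Σᵢ 1/nᵢ = d/2 − 1` (the vanishing combinatorial curvature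
condition at a vertex of degree `d` with incident face degrees `nᵢ`). -/
theorem stmt_9 :
    {m : Multiset ℕ | 3 ≤ Multiset.card m ∧ (∀ n ∈ m, 3 ≤ n) ∧
        (m.map fun n => (1 : ℝ) / n).sum = (Multiset.card m : ℝ) / 2 - 1} =
      {({3, 7, 42} : Multiset ℕ), {3, 8, 24}, {3, 9, 18}, {3, 10, 15}, {3, 12, 12},
        {4, 5, 20}, {4, 6, 12}, {4, 8, 8}, {5, 5, 10}, {6, 6, 6},
        {3, 3, 4, 12}, {3, 3, 6, 6}, {3, 4, 4, 6}, {4, 4, 4, 4},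
        {3, 3, 3, 3, 6}, {3, 3, 3, 4, 4}, {3, 3, 3, 3, 3, 3}} := by
  ext m
  simp only [Set.mem_ofPred_eq, Set.mem_insert_iff, Set.mem_singleton_iff]
  constructor
  · rintro ⟨hcard, hge, hsum⟩
    obtain ⟨l, hl, rfl⟩ : ∃ l : List ℕ, l.Pairwise (· ≤ ·) ∧ ↑l = m :=
      ⟨m.sort, m.pairwise_sort _, m.sort_eq _⟩
    simp only [Multiset.coe_card, Multiset.mem_coe, bind_pure_comp, Multiset.fmap_def,
      Multiset.map_coe, Multiset.sum_coe, List.map_map, Function.comp_def] at hcard hge hsum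
    have hq : (l.map fun x : ℕ => (1 : ℚ) / x).sum = l.length / 2 - 1 := by
      apply Rat.cast_injective (α := ℝ)
      simpa [Rat.cast_list_sum, Function.comp_def] using hsum
    have hsol : l ∈ (List.range' 3 4).flatMap fun d => unitFractionSolutions d 3 (d / 2 - 1) :=
      List.mem_flatMap.2 ⟨l.length,
        List.mem_range'_1.2 ⟨hcard, by have := length_le_six_of_sum_one_div_eq hge hq; omega⟩,
        mem_unitFractionSolutions three_pos hl hge hq⟩
    simp only [flatMap_unitFractionSolutions_curvature_zero, List.mem_cons, List.not_mem_nil,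
      or_false] at hsol
    rcases hsol with rfl | rfl | rfl | rfl | rfl | rfl | rfl | rfl | rfl | rfl | rfl | rfl | rfl |
      rfl | rfl | rfl | rfl <;> decide
  · rintro (rfl | rfl | rfl | rfl | rfl | rfl | rfl | rfl | rfl | rfl | rfl | rfl | rfl | rfl |
      rfl | rfl | rfl) <;> norm_num
end

section
/- Let (X,d) be a complete geodesic space satisfying the volume bound H²(B_R(p)) ≤ C·R² for all R ≥ 1 (quadratic volume growth), realized as the regular polygonal surface S(G) of a semiplanar graph G with nonnegative combinatorial curvature. Then the simple random walk on G is recurrent; equivalently, G is parabolic: every positive superharmonic function on G is constant. -/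
/-!
A positive superharmonic `f` satisfies Picone's inequality: for every finitely supported `φ`,
`∑_{x ∼ y} (f x φ y - f y φ x)² / (f x f y) ≤ ∑_{x ∼ y} (φ y - φ x)²`, since the difference
is `-2 ∑ₓ (φ x)² / f x · ∑_{y ∼ x} (f y - f x) ≥ 0`. If `φ = 1` at both ends of an edge `xy`,
the left side dominates `(f y - f x)² / (f x f y)`.

The cutoff of the ball of radius `N`, linear on the annulus `[N, 2N]`, has Dirichlet energy at
most `|B_{2N}| / N² ≤ 4C`. The average of these cutoffs over the scales `2 ^ j`, `j < n`, has
disjoint transition annuli, so its energy is at most `n · 4C / n² = 4C / n`. Letting `n → ∞`,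
`f` is constant along every edge, hence constant.
-/

open Finset

namespace Parabolicity

noncomputable def cutoff (N k : ℕ) : ℝ := max (min (2 - k / N) 1) 0

lemma cutoff_of_le {N k : ℕ} (h : k ≤ N) : cutoff N k = 1 := by
  have : (k : ℝ) / N ≤ 1 := div_le_one_of_le₀ (by exact_mod_cast h) (Nat.cast_nonneg N)
  rw [cutoff, min_eq_right (by linarith), max_eq_left zero_le_one]

lemma cutoff_of_two_mul_le {N k : ℕ} (hN : 0 < N) (h : 2 * N ≤ k) : cutoff N k = 0 := by
  have : 2 ≤ (k : ℝ) / N := by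
    rw [le_div_iff₀ (by exact_mod_cast hN)]
    exact_mod_cast h
  exact max_eq_right ((min_le_left _ _).trans (by linarith))

lemma abs_cutoff_sub_cutoff_le (N a b : ℕ) : |cutoff N a - cutoff N b| ≤ |(a : ℝ) - b| / N :=
  calc |cutoff N a - cutoff N b| ≤ |min (2 - a / N : ℝ) 1 - min (2 - b / N : ℝ) 1| :=
        abs_max_sub_max_le_abs _ _ _
    _ ≤ |(2 - a / N : ℝ) - (2 - b / N : ℝ)| := by
        simpa using abs_min_sub_min_le_max (2 - a / N : ℝ) 1 (2 - b / N : ℝ) 1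
    _ = |(a : ℝ) - b| / N := by
        rw [show (2 - a / N : ℝ) - (2 - b / N : ℝ) = (b - a) / N by ring, abs_div, Nat.abs_cast,
          abs_sub_comm]

lemma sq_cutoff_sub_cutoff_le {N a b : ℕ} (hab : a ≤ b + 1) (hba : b ≤ a + 1) :
    (cutoff N a - cutoff N b) ^ 2 ≤ 1 / N ^ 2 := by
  have hab' : (a : ℝ) ≤ b + 1 := by exact_mod_cast hab
  have hba' : (b : ℝ) ≤ a + 1 := by exact_mod_cast hba
  calc (cutoff N a - cutoff N b) ^ 2 = |cutoff N a - cutoff N b| ^ 2 := (sq_abs _).symm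
    _ ≤ (1 / N) ^ 2 := by
        gcongr
        exact (abs_cutoff_sub_cutoff_le N a b).trans
          (by gcongr; exact abs_sub_le_iff.2 ⟨by linarith, by linarith⟩)
    _ = 1 / N ^ 2 := by rw [one_div_pow]

lemma le_and_le_two_mul_of_cutoff_ne {N a b : ℕ} (hN : 0 < N) (hab : a ≤ b + 1)
    (hba : b ≤ a + 1) (hne : cutoff N a ≠ cutoff N b) : N ≤ a ∧ a ≤ 2 * N := by
  by_contra h
  apply hne
  rcases not_and_or.1 h with h | h
  · rw [cutoff_of_le (by omega), cutoff_of_le (by omega)]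
  · rw [cutoff_of_two_mul_le hN (by omega), cutoff_of_two_mul_le hN (by omega)]

lemma cutoff_two_pow_eq_of_lt {i j a b : ℕ} (hij : i < j) (hab : a ≤ b + 1) (hba : b ≤ a + 1)
    (hi : cutoff (2 ^ i) a ≠ cutoff (2 ^ i) b) : cutoff (2 ^ j) a = cutoff (2 ^ j) b := by
  by_contra hj
  have hpow : 2 * 2 ^ i ≤ 2 ^ j := by
    rw [← pow_succ']
    exact Nat.pow_le_pow_right two_pos hij
  obtain ⟨-, hai⟩ := le_and_le_two_mul_of_cutoff_ne (by positivity) hab hba hi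
  obtain ⟨-, hbi⟩ := le_and_le_two_mul_of_cutoff_ne (by positivity) hba hab (Ne.symm hi)
  obtain ⟨haj, -⟩ := le_and_le_two_mul_of_cutoff_ne (by positivity) hab hba hj
  obtain ⟨hbj, -⟩ := le_and_le_two_mul_of_cutoff_ne (by positivity) hba hab (Ne.symm hj)
  exact hi (by rw [show a = b by omega])

lemma sq_sum_eq_sum_sq {ι R : Type*} [CommSemiring R] (s : Finset ι) (g : ι → R)
    (h : ∀ i ∈ s, ∀ j ∈ s, g i ≠ 0 → g j ≠ 0 → i = j) :
    (∑ i ∈ s, g i) ^ 2 = ∑ i ∈ s, g i ^ 2 := by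
  rw [sq, sum_mul_sum]
  refine sum_congr rfl fun i hi => ?_
  rw [sum_eq_single i (fun j hj hji => ?_) (absurd hi), sq]
  by_contra hne
  exact hji (h i hi j hj (left_ne_zero_of_mul hne) (right_ne_zero_of_mul hne)).symm

/-- A discrete logarithmic cutoff. -/
noncomputable def dyadicCutoff (n k : ℕ) : ℝ := (∑ j ∈ range n, cutoff (2 ^ j) k) / n

lemma dyadicCutoff_of_le_one {n k : ℕ} (hn : 0 < n) (hk : k ≤ 1) : dyadicCutoff n k = 1 := by
  have hk' : ∀ j, cutoff (2 ^ j) k = 1 := fun j => cutoff_of_le (hk.trans Nat.one_le_two_pow)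
  rw [dyadicCutoff, sum_congr rfl fun j _ => hk' j, sum_const, card_range, nsmul_one,
    div_self (by positivity)]

lemma dyadicCutoff_of_two_pow_le {n k : ℕ} (hk : 2 ^ n ≤ k) : dyadicCutoff n k = 0 := by
  rw [dyadicCutoff, sum_eq_zero fun j hj => ?_, zero_div]
  refine cutoff_of_two_mul_le (by positivity) (le_trans ?_ hk)
  rw [← pow_succ']
  exact Nat.pow_le_pow_right two_pos (mem_range.1 hj)

lemma sq_dyadicCutoff_sub {n a b : ℕ} (hab : a ≤ b + 1) (hba : b ≤ a + 1) :
    (dyadicCutoff n a - dyadicCutoff n b) ^ 2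
      = (∑ j ∈ range n, (cutoff (2 ^ j) a - cutoff (2 ^ j) b) ^ 2) / n ^ 2 := by
  rw [dyadicCutoff, dyadicCutoff, ← sub_div, ← sum_sub_distrib, div_pow, sq_sum_eq_sum_sq]
  intro i _ j _ hi hj
  rw [sub_ne_zero] at hi hj
  rcases lt_trichotomy i j with hij | hij | hij
  · exact absurd (cutoff_two_pow_eq_of_lt hij hab hba hi) hj
  · exact hij
  · exact absurd (cutoff_two_pow_eq_of_lt hij hab hba hj) hi

section Graph

variable {V : Type*} {G : SimpleGraph V}

lemma _root_.SimpleGraph.Adj.dist_le_dist_add_one {p x y : V} (h : G.Adj x y) :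
    G.dist p y ≤ G.dist p x + 1 := by
  rcases h.diff_dist_adj (u := p) with h | h | h <;> omega

lemma _root_.SimpleGraph.Preconnected.eq_of_forall_adj {β : Type*} (hG : G.Preconnected)
    {f : V → β} (h : ∀ x y, G.Adj x y → f x = f y) (x y : V) : f x = f y := by
  obtain ⟨w⟩ := hG x y
  induction w with
  | nil => rfl
  | cons hadj _ ih => exact (h _ _ hadj).trans ih

variable [DecidableRel G.Adj]

variable (G) in
def edgeSum (T : Finset V) (F : V → V → ℝ) : ℝ := ∑ x ∈ T, ∑ y ∈ T with G.Adj x y, F x y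

variable {T : Finset V} {F : V → V → ℝ}

lemma edgeSum_swap : edgeSum G T (fun x y => F y x) = edgeSum G T F := by
  simp only [edgeSum, sum_filter]
  rw [sum_comm]
  exact sum_congr rfl fun x _ => sum_congr rfl fun y _ => if_congr (G.adj_comm y x) rfl rfl

lemma le_edgeSum (hF : ∀ x y, G.Adj x y → 0 ≤ F x y) {x y : V} (hx : x ∈ T) (hy : y ∈ T)
    (hxy : G.Adj x y) : F x y ≤ edgeSum G T F := by
  have hinner : ∀ x ∈ T, 0 ≤ ∑ y ∈ T with G.Adj x y, F x y :=
    fun x _ => sum_nonneg fun y hy => hF x y (mem_filter.1 hy).2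
  calc F x y ≤ ∑ y ∈ T with G.Adj x y, F x y :=
        single_le_sum (fun y hy => hF x y (mem_filter.1 hy).2) (mem_filter.2 ⟨hy, hxy⟩)
    _ ≤ edgeSum G T F := single_le_sum hinner hx

variable [∀ v, Fintype (G.neighborSet v)]

lemma filter_adj_eq_neighborFinset {x : V} (h : ∀ y, G.Adj x y → y ∈ T) :
    {y ∈ T | G.Adj x y} = G.neighborFinset x := by
  ext y
  simp only [mem_filter, SimpleGraph.mem_neighborFinset]
  exact ⟨And.right, fun hy => ⟨h y hy, hy⟩⟩

lemma edgeSum_picone_le {f φ : V → ℝ} (hf : ∀ x, 0 < f x)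
    (hsuper : ∀ x, ∑ y ∈ G.neighborFinset x, (f y - f x) ≤ 0)
    (hT : ∀ x ∈ T, φ x ≠ 0 → ∀ y, G.Adj x y → y ∈ T) :
    edgeSum G T (fun x y => (f x * φ y - f y * φ x) ^ 2 / (f x * f y))
      ≤ edgeSum G T (fun x y => (φ y - φ x) ^ 2) := by
  set g : V → V → ℝ := fun x y => (f x - f y) * (φ x ^ 2 / f x)
  have hg : 0 ≤ edgeSum G T g := sum_nonneg fun x hx => by
    rw [← sum_mul]
    by_cases hφ : φ x = 0
    · simp [hφ]
    rw [filter_adj_eq_neighborFinset (hT x hx hφ)]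
    have : 0 ≤ ∑ y ∈ G.neighborFinset x, (f x - f y) := by
      simpa only [← sum_neg_distrib, neg_sub] using neg_nonneg.2 (hsuper x)
    exact mul_nonneg this (div_nonneg (sq_nonneg _) (hf x).le)
  have hid : ∀ x y, (f x * φ y - f y * φ x) ^ 2 / (f x * f y)
      = (φ y - φ x) ^ 2 - (g x y + g y x) := fun x y => by
    simp only [g]
    field_simp [(hf x).ne', (hf y).ne']
    ring
  calc edgeSum G T (fun x y => (f x * φ y - f y * φ x) ^ 2 / (f x * f y))
      = edgeSum G T (fun x y => (φ y - φ x) ^ 2)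
          - (edgeSum G T g + edgeSum G T (fun x y => g y x)) := by
        simp only [edgeSum, ← sum_add_distrib, ← sum_sub_distrib]
        exact sum_congr rfl fun x _ => sum_congr rfl fun y _ => hid x y
    _ ≤ edgeSum G T (fun x y => (φ y - φ x) ^ 2) := by
        rw [edgeSum_swap (F := g)]
        linarith

lemma edgeSum_cutoff_le {p : V} {C : ℝ} {N : ℕ} (hN : 0 < N)
    (hvol : ∀ R : ℕ, 1 ≤ R → ∑ x ∈ T with G.dist p x ≤ R, (G.degree x : ℝ) ≤ C * R ^ 2) :
    edgeSum G T (fun x y => (cutoff N (G.dist p y) - cutoff N (G.dist p x)) ^ 2) ≤ 4 * C := by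
  have hterm : ∀ x ∈ T,
      ∑ y ∈ T with G.Adj x y, (cutoff N (G.dist p y) - cutoff N (G.dist p x)) ^ 2
        ≤ if G.dist p x ≤ 2 * N then (G.degree x : ℝ) / N ^ 2 else 0 := by
    intro x _
    split_ifs with hx
    · calc _ ≤ ∑ y ∈ T with G.Adj x y, (1 / N ^ 2 : ℝ) := sum_le_sum fun y hy =>
            sq_cutoff_sub_cutoff_le ((mem_filter.1 hy).2.dist_le_dist_add_one)
              ((mem_filter.1 hy).2.symm.dist_le_dist_add_one)
        _ ≤ (G.degree x : ℝ) / N ^ 2 := by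
            rw [sum_const, nsmul_eq_mul, mul_one_div, ← G.card_neighborFinset_eq_degree]
            gcongr ?_ / _
            exact_mod_cast card_le_card fun y hy =>
              (G.mem_neighborFinset x y).2 (mem_filter.1 hy).2
    · refine (sum_eq_zero fun y hy => ?_).le
      have hxy := (mem_filter.1 hy).2
      rw [sq_eq_zero_iff, sub_eq_zero]
      by_contra hne
      exact hx (le_and_le_two_mul_of_cutoff_ne hN hxy.symm.dist_le_dist_add_one
        hxy.dist_le_dist_add_one (Ne.symm hne)).2
  calc _ ≤ ∑ x ∈ T, if G.dist p x ≤ 2 * N then (G.degree x : ℝ) / N ^ 2 else 0 :=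
        sum_le_sum hterm
    _ = (∑ x ∈ T with G.dist p x ≤ 2 * N, (G.degree x : ℝ)) / N ^ 2 := by
        rw [← sum_filter, sum_div]
    _ ≤ C * ((2 * N : ℕ) : ℝ) ^ 2 / N ^ 2 := by
        gcongr
        exact hvol _ (by omega)
    _ = 4 * C := by
        push_cast
        field_simp
        ring

lemma edgeSum_dyadicCutoff_le {p : V} {C : ℝ} {n : ℕ}
    (hvol : ∀ R : ℕ, 1 ≤ R → ∑ x ∈ T with G.dist p x ≤ R, (G.degree x : ℝ) ≤ C * R ^ 2) :
    edgeSum G T (fun x y => (dyadicCutoff n (G.dist p y) - dyadicCutoff n (G.dist p x)) ^ 2)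
      ≤ 4 * C / n := by
  calc _ = ∑ j ∈ range n, edgeSum G T
          (fun x y => (cutoff (2 ^ j) (G.dist p y) - cutoff (2 ^ j) (G.dist p x)) ^ 2) / n ^ 2 := by
        simp only [edgeSum, sum_div]
        rw [sum_comm]
        refine sum_congr rfl fun x _ => ?_
        rw [sum_comm]
        refine sum_congr rfl fun y hy => ?_
        have hxy := (mem_filter.1 hy).2
        rw [sq_dyadicCutoff_sub hxy.dist_le_dist_add_one
          hxy.symm.dist_le_dist_add_one, sum_div]
    _ ≤ ∑ j ∈ range n, 4 * C / n ^ 2 := by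
        gcongr
        exact edgeSum_cutoff_le (by positivity) hvol
    _ = 4 * C / n := by
        rw [sum_const, card_range, nsmul_eq_mul]
        rcases eq_or_ne n 0 with rfl | hn
        · simp
        · field_simp

lemma sq_sub_div_mul_le {f : V → ℝ} {C : ℝ} (hf : ∀ x, 0 < f x)
    (hsuper : ∀ x, ∑ y ∈ G.neighborFinset x, (f y - f x) ≤ 0) {x y : V} (hxy : G.Adj x y)
    (hfin : ∀ R : ℕ, ({z : V | G.dist x z ≤ R} : Set V).Finite)
    (hvol : ∀ R : ℕ, 1 ≤ R → ∑ z ∈ (hfin R).toFinset, (G.degree z : ℝ) ≤ C * R ^ 2)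
    {n : ℕ} (hn : 0 < n) :
    (f y - f x) ^ 2 / (f x * f y) ≤ 4 * C / n := by
  set T := (hfin (2 ^ n)).toFinset
  set φ : V → ℝ := fun z => dyadicCutoff n (G.dist x z)
  have hmemT : ∀ z, z ∈ T ↔ G.dist x z ≤ 2 ^ n := by simp [T]
  have hdist : G.dist x y = 1 := SimpleGraph.dist_eq_one_iff_adj.2 hxy
  have hφx : φ x = 1 := dyadicCutoff_of_le_one hn (by simp)
  have hφy : φ y = 1 := dyadicCutoff_of_le_one hn hdist.le
  have hsupp : ∀ z ∈ T, φ z ≠ 0 → ∀ w, G.Adj z w → w ∈ T := by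
    intro z _ hz w hzw
    have : G.dist x z < 2 ^ n := by
      by_contra h
      exact hz (dyadicCutoff_of_two_pow_le (not_lt.1 h))
    have := hzw.dist_le_dist_add_one (p := x)
    rw [hmemT]
    omega
  have hvolT : ∀ R : ℕ, 1 ≤ R → ∑ z ∈ T with G.dist x z ≤ R, (G.degree z : ℝ) ≤ C * R ^ 2 :=
    fun R hR => (sum_le_sum_of_subset_of_nonneg (fun z hz => by simpa using (mem_filter.1 hz).2)
      (fun _ _ _ => by positivity)).trans (hvol R hR)
  calc (f y - f x) ^ 2 / (f x * f y) = (f x * φ y - f y * φ x) ^ 2 / (f x * f y) := by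
        rw [hφx, hφy]
        ring
    _ ≤ edgeSum G T (fun x y => (f x * φ y - f y * φ x) ^ 2 / (f x * f y)) :=
        le_edgeSum (F := fun a b => (f a * φ b - f b * φ a) ^ 2 / (f a * f b))
          (fun a b _ => div_nonneg (sq_nonneg _) (mul_pos (hf a) (hf b)).le)
          ((hmemT x).2 (by simp)) ((hmemT y).2 (hdist.trans_le Nat.one_le_two_pow)) hxy
    _ ≤ edgeSum G T (fun x y => (φ y - φ x) ^ 2) := edgeSum_picone_le hf hsuper hsupp
    _ ≤ 4 * C / n := edgeSum_dyadicCutoff_le hvolT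

end Graph

end Parabolicity

open Parabolicity

theorem stmt_19_general {V : Type*} (G : SimpleGraph V) [∀ v, Fintype (G.neighborSet v)]
    (hconn : G.Connected)
    (C : ℝ)
    (hfin : ∀ (p : V) (R : ℕ), ({x : V | G.dist p x ≤ R} : Set V).Finite)
    (hvol : ∀ (p : V) (R : ℕ), 1 ≤ R →
      ∑ x ∈ (hfin p R).toFinset, (G.degree x : ℝ) ≤ C * (R : ℝ) ^ 2)
    (f : V → ℝ) (hf : ∀ x, 0 < f x)
    (hsuper : ∀ x, ∑ y ∈ G.neighborFinset x, (f y - f x) ≤ 0) :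
    ∀ x y, f x = f y := by
  classical
  refine hconn.preconnected.eq_of_forall_adj fun x y hxy => ?_
  have hratio : (f y - f x) ^ 2 / (f x * f y) ≤ 0 :=
    ge_of_tendsto (tendsto_const_div_atTop_nhds_zero_nat (4 * C)) <| Filter.eventually_atTop.2
      ⟨1, fun _ hn => sq_sub_div_mul_le hf hsuper hxy (hfin x) (hvol x) hn⟩
  have hsq : (f y - f x) ^ 2 ≤ 0 := by
    simpa using (div_le_iff₀ (mul_pos (hf x) (hf y))).1 hratio
  linarith [pow_eq_zero_iff two_ne_zero |>.1 (le_antisymm hsq (sq_nonneg _))]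

/-- Parabolicity of semiplanar graphs with nonnegative curvature: let `G` be the
(connected, locally finite) graph of a nonnegatively curved semiplanar graph, with
vertex degrees in `[3,6]` and quadratic volume growth
`|B_R(p)| = Σ_{x ∈ B_R(p)} dₓ ≤ C·R²` for all `R ≥ 1` (inherited from the quadratic
Hausdorff-measure growth of its polygonal surface `S(G)`). Then `G` is parabolic:
every positive superharmonic function on `G` is constant. -/
theorem stmt_19 {V : Type*} (G : SimpleGraph V) [∀ v, Fintype (G.neighborSet v)]
    (hconn : G.Connected)
    (hdeg : ∀ v, 3 ≤ G.degree v ∧ G.degree v ≤ 6)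
    (C : ℝ) (hC : 0 < C)
    (hfin : ∀ (p : V) (R : ℕ), ({x : V | G.dist p x ≤ R} : Set V).Finite)
    (hvol : ∀ (p : V) (R : ℕ), 1 ≤ R →
      ∑ x ∈ (hfin p R).toFinset, (G.degree x : ℝ) ≤ C * (R : ℝ) ^ 2)
    (f : V → ℝ) (hf : ∀ x, 0 < f x)
    (hsuper : ∀ x, ∑ y ∈ G.neighborFinset x, (f y - f x) ≤ 0) :
    ∀ x y, f x = f y :=
  stmt_19_general G hconn C hfin hvol f hf hsuper
end
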